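/- Let p be an integer not divisible by 3. Then for every integer j, Σ_{ν=0}^{26} ζ_{27}^{jν − 4pν³} = 0 if and only if (j ≢ 0 mod 3) or (j ≡ 6p mod 9). Equivalently, 𝔓(p/27) = { j ∈ [0,53] ∩ ℤ : (j ≡ 1 or 2 mod 3) ∪ (j ≡ 6p mod 9) }. -/
import Mathlib

/-- ζ_m = exp(2πi/m), the primitive m-th root of unity. -/
noncomputable def zeta (m : ℕ) : ℂ := Complex.exp (2 * Real.pi * Complex.I / (m : ℂ))

private lemma cube_aux (U : ℂ) (h3 : U ^ 3 = 1) (h1 : U ≠ 1) : 1 + U + U ^ 2 = 0 := by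
  have h : (U - 1) * (1 + U + U ^ 2) = 0 := by linear_combination h3
  rcases mul_eq_zero.mp h with h | h
  · exact absurd (by linear_combination h) h1
  · exact h

/-- For an integer p not divisible by 3, the even partial Kummer sum
for q = 27, namely Σ_{ν=0}^{26} ζ_{27}^{jν − 4pν³}, vanishes if and only if
(j ≢ 0 mod 3) or (j ≡ 6p mod 9). -/
theorem points_of_constancy_q_twentyseven (p : ℤ) (hp : ¬ (3 : ℤ) ∣ p) (j : ℤ) :
    (∑ ν ∈ Finset.range 27, zeta 27 ^ (j * (ν : ℤ) - 4 * p * (ν : ℤ) ^ 3)) = 0 ↔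
    (¬ (3 : ℤ) ∣ j) ∨ j ≡ 6 * p [ZMOD 9] := by
  have hprim : IsPrimitiveRoot (zeta 27) 27 := by
    have := Complex.isPrimitiveRoot_exp 27 (by norm_num)
    simpa [zeta] using this
  set ζ := zeta 27 with hζdef
  have hne : ζ ≠ 0 := by
    intro h
    have := hprim.pow_eq_one
    rw [h] at this
    simp at this
  have hone : ∀ e : ℤ, ζ ^ e = 1 ↔ (27 : ℤ) ∣ e := fun e => hprim.zpow_eq_one_iff_dvd e
  have h27 : ζ ^ (27 : ℤ) = 1 := hprim.zpow_eq_one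
  have hz : ∀ e e' : ℤ, (27 : ℤ) ∣ (e - e') → ζ ^ e = ζ ^ e' := by
    intro e e' hd
    obtain ⟨c, hc⟩ := hd
    have he : e = e' + 27 * c := by linarith
    rw [he, zpow_add₀ hne, zpow_mul, h27, one_zpow, mul_one]
  set x := ζ ^ j with hxdef
  set y := ζ ^ p with hydef
  have hX : ∀ n : ℕ, (x ^ n = 1 ↔ (27 : ℤ) ∣ j * (n : ℤ)) := by
    intro n
    rw [hxdef, ← zpow_natCast, ← zpow_mul]
    exact hone _
  have hx27 : x ^ 27 = 1 := (hX 27).mpr (by push_cast; exact ⟨j, by ring⟩)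
  have hy27 : y ^ 27 = 1 := by
    rw [hydef, ← zpow_natCast, ← zpow_mul, hone]
    exact ⟨p, by ring⟩
  have hxne : x ≠ 0 := zpow_ne_zero _ hne
  have hyne : y ≠ 0 := zpow_ne_zero _ hne
  have key : ∀ (ν m : ℕ), (27 : ℤ) ∣ (4 * (ν : ℤ) ^ 3 + (m : ℤ)) →
      ζ ^ (j * (ν : ℤ) - 4 * p * (ν : ℤ) ^ 3) = x ^ ν * y ^ m := by
    intro ν m hm
    obtain ⟨c, hc⟩ := hm
    have h1 : ζ ^ (j * (ν : ℤ) - 4 * p * (ν : ℤ) ^ 3) = ζ ^ (j * (ν : ℤ) + p * (m : ℤ)) :=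
      hz _ _ ⟨-p * c, by linear_combination (-p) * hc⟩
    rw [h1, zpow_add₀ hne, zpow_mul, zpow_mul, zpow_natCast, zpow_natCast]
  have hStot : (∑ ν ∈ Finset.range 27, ζ ^ (j * (ν : ℤ) - 4 * p * (ν : ℤ) ^ 3)) =
      (1 + x ^ 9 + x ^ 18) *
      (1 + x * y ^ 23 + x ^ 2 * y ^ 22 + x ^ 3 + x ^ 4 * y ^ 14 + x ^ 5 * y ^ 13
        + x ^ 6 + x ^ 7 * y ^ 5 + x ^ 8 * y ^ 4) := by
    simp only [Finset.sum_range_succ, Finset.sum_range_zero]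
    rw [key 0 0 (by norm_num), key 1 23 (by norm_num), key 2 22 (by norm_num),
      key 3 0 (by norm_num), key 4 14 (by norm_num), key 5 13 (by norm_num),
      key 6 0 (by norm_num), key 7 5 (by norm_num), key 8 4 (by norm_num),
      key 9 0 (by norm_num), key 10 23 (by norm_num), key 11 22 (by norm_num),
      key 12 0 (by norm_num), key 13 14 (by norm_num), key 14 13 (by norm_num),
      key 15 0 (by norm_num), key 16 5 (by norm_num), key 17 4 (by norm_num),
      key 18 0 (by norm_num), key 19 23 (by norm_num), key 20 22 (by norm_num),
      key 21 0 (by norm_num), key 22 14 (by norm_num), key 23 13 (by norm_num),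
      key 24 0 (by norm_num), key 25 5 (by norm_num), key 26 4 (by norm_num)]
    ring
  rw [hStot]
  by_cases hj3 : (3 : ℤ) ∣ j
  · -- 3 ∣ j
    have hx9 : x ^ 9 = 1 := (hX 9).mpr (by push_cast; omega)
    have hx18 : x ^ 18 = 1 := by
      have : x ^ 18 = (x ^ 9) ^ 2 := by ring
      rw [this, hx9, one_pow]
    rw [hx9, hx18]
    have h3 : (1 : ℂ) + 1 + 1 = 3 := by norm_num
    rw [h3, mul_eq_zero]
    have h3ne : (3 : ℂ) ≠ 0 := by norm_num
    simp only [h3ne, false_or]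
    -- RHS simplification
    have hmod : (j ≡ 6 * p [ZMOD 9]) ↔ (9 : ℤ) ∣ (6 * p - j) := Int.modEq_iff_dvd
    have hV1 : x ^ 3 = 1 ↔ (9 : ℤ) ∣ j := by
      rw [hX 3]
      push_cast
      constructor
      · intro h; omega
      · intro h; omega
    have hV3 : (x ^ 3) ^ 3 = 1 := by
      have : (x ^ 3) ^ 3 = x ^ 9 := by ring
      rw [this, hx9]
    have hW1 : x ^ 3 * y ^ 18 = 1 ↔ (27 : ℤ) ∣ (3 * j + 18 * p) := by
      rw [hxdef, hydef, ← zpow_natCast (ζ ^ j), ← zpow_natCast (ζ ^ p), ← zpow_mul, ← zpow_mul,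
        ← zpow_add₀ hne, hone]
      push_cast
      constructor
      · intro h; omega
      · intro h; omega
    have hW3 : (x ^ 3 * y ^ 18) ^ 3 = 1 := by
      have : (x ^ 3 * y ^ 18) ^ 3 = x ^ 9 * (y ^ 27) ^ 2 := by ring
      rw [this, hx9, hy27]; norm_num
    have hBfact : (1 + x * y ^ 23 + x ^ 2 * y ^ 22 + x ^ 3 + x ^ 4 * y ^ 14 + x ^ 5 * y ^ 13
        + x ^ 6 + x ^ 7 * y ^ 5 + x ^ 8 * y ^ 4) =
        (1 + x ^ 3 + (x ^ 3) ^ 2) +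
        (x * y ^ 23 + x ^ 2 * y ^ 22) * (1 + x ^ 3 * y ^ 18 + (x ^ 3 * y ^ 18) ^ 2) := by
      linear_combination (-(x ^ 4 * y ^ 14 + x ^ 5 * y ^ 13 +
        (y ^ 27 + 1) * (x ^ 7 * y ^ 5 + x ^ 8 * y ^ 4))) * hy27
    rw [hBfact]
    by_cases hc : (9 : ℤ) ∣ (6 * p - j)
    · -- target congruence holds; sum is zero
      have hVne : x ^ 3 ≠ 1 := fun h => absurd (hV1.mp h) (by omega)
      have hWne : x ^ 3 * y ^ 18 ≠ 1 := fun h => absurd (hW1.mp h) (by omega)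
      have e1 := cube_aux _ hV3 hVne
      have e2 := cube_aux _ hW3 hWne
      rw [e1, e2, mul_zero, add_zero]
      exact iff_of_true rfl (Or.inr (hmod.mpr hc))
    · have hRHSfalse : ¬ ((¬ (3 : ℤ) ∣ j) ∨ j ≡ 6 * p [ZMOD 9]) := by
        rintro (h | h)
        · exact h hj3
        · exact hc (hmod.mp h)
      refine iff_of_false ?_ hRHSfalse
      by_cases h9 : (9 : ℤ) ∣ j
      · have hV : x ^ 3 = 1 := hV1.mpr h9
        have hWne : x ^ 3 * y ^ 18 ≠ 1 := fun h => absurd (hW1.mp h) (by omega)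
        have e2 := cube_aux _ hW3 hWne
        rw [e2, hV, mul_zero, add_zero]
        norm_num
      · have hW : x ^ 3 * y ^ 18 = 1 := by
          obtain ⟨a, ha⟩ := hj3
          have h1 : ¬ (3 : ℤ) ∣ a := by omega
          have h2 : ¬ (3 : ℤ) ∣ (2 * p - a) := by omega
          have ha3 : a % 3 = 1 ∨ a % 3 = 2 := by omega
          have hp3 : p % 3 = 1 ∨ p % 3 = 2 := by omega
          refine hW1.mpr ?_
          rcases ha3 with h | h <;> rcases hp3 with h' | h' <;> omega
        have hVne : x ^ 3 ≠ 1 := fun h => h9 (hV1.mp h)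
        have e1 := cube_aux _ hV3 hVne
        rw [e1, hW]
        have hWsq : ((1:ℂ) + 1 + 1 ^ 2) = 3 := by norm_num
        rw [hWsq, zero_add]
        intro h
        have hxy : x + y = 0 := by
          have h3 : x * y ^ 22 * (x + y) = 0 := by linear_combination (1/3 : ℂ) * h
          rcases mul_eq_zero.mp h3 with h4 | h4
          · rcases mul_eq_zero.mp h4 with h5 | h5
            · exact absurd h5 hxne
            · exact absurd h5 (pow_ne_zero _ hyne)
          · exact h4
        have hx_eq : x = -y := by linear_combination hxy
        have : (1 : ℂ) = -1 := by
          calc (1 : ℂ) = x ^ 27 := hx27.symm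
          _ = (-y) ^ 27 := by rw [hx_eq]
          _ = -(y ^ 27) := by ring
          _ = -1 := by rw [hy27]
        norm_num at this
  · -- 3 ∤ j : sum is zero
    have hU3 : (x ^ 9) ^ 3 = 1 := by
      have : (x ^ 9) ^ 3 = x ^ 27 := by ring
      rw [this, hx27]
    have hUne : x ^ 9 ≠ 1 := fun h => by
      have := (hX 9).mp h
      push_cast at this
      omega
    have e := cube_aux _ hU3 hUne
    have h0 : (1 : ℂ) + x ^ 9 + x ^ 18 = 0 := by linear_combination e
    rw [h0, zero_mul]
    exact iff_of_true rfl (Or.inl hj3)
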